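/- Let n ≥ 1, let J be the standard 2n×2n symplectic matrix, let A be a real 2n×2n matrix, and let N be a real symmetric 2n×2n matrix such that the complex Hermitian matrix N + i·(AᵀJ + JA) is positive semidefinite. Define M_t = ∫_0^t (exp(τA))ᵀ · N · exp(τA) dτ for t ≥ 0. Then for every t ≥ 0 the complex Hermitian matrix M_t + i·(J − (exp(tA))ᵀ J exp(tA)) is positive semidefinite, and likewise M_t − i·(J − (exp(tA))ᵀ J exp(tA)) is positive semidefinite. -/

import Mathlib

noncomputable section
open Matrix
open scoped ComplexOrder

/-- The standard `2n × 2n` symplectic matrix: block diagonal with `n` copies of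
the block `((0,1),(-1,0))`. -/
def sympJ (n : ℕ) : Matrix (Fin (2*n)) (Fin (2*n)) ℝ :=
  Matrix.of fun j k =>
    if j.val % 2 = 0 ∧ k.val = j.val + 1 then 1
    else if k.val % 2 = 0 ∧ j.val = k.val + 1 then -1 else 0
/-- `Mmat d A N t = ∫_0^t (exp(τA))ᵀ · N · exp(τA) dτ` (entrywise integral). -/
def Mmat (d : ℕ) (A N : Matrix (Fin d) (Fin d) ℝ) (t : ℝ) : Matrix (Fin d) (Fin d) ℝ :=
  Matrix.of fun i j =>
    ∫ τ in (0:ℝ)..t, ((NormedSpace.exp (τ • A))ᵀ * N * NormedSpace.exp (τ • A)) i j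

/-!
With `E τ = exp (τ • A)` and `S = AᵀJ + JA`, the derivative of `(E τ)ᵀ J (E τ)` is
`(E τ)ᵀ S (E τ)`, so `J - (E t)ᵀ J (E t) = -∫₀ᵗ (E τ)ᵀ S (E τ) dτ`. Hence
`M_t ± i(J - (E t)ᵀ J (E t)) = ∫₀ᵗ (E τ)ᵀ (N ∓ iS) (E τ) dτ` is an integral of congruences of
`N + iS` and of its entrywise conjugate `N - iS`, both positive semidefinite.
-/

open MeasureTheory Set

section IntervalIntegral

variable {m 𝕜 : Type*} [Fintype m] [RCLike 𝕜]

theorem Matrix.posSemidef_of_intervalIntegral {f : ℝ → Matrix m m 𝕜} {t : ℝ} (ht : 0 ≤ t)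
    (hf : ∀ i j, IntervalIntegrable (fun τ => f τ i j) volume 0 t)
    (hpsd : ∀ τ ∈ Icc 0 t, (f τ).PosSemidef) :
    (Matrix.of fun i j => ∫ τ in 0..t, f τ i j).PosSemidef := by
  refine .of_dotProduct_mulVec_nonneg ?_ fun x => ?_
  · ext i j
    rw [conjTranspose_apply, of_apply, of_apply, RCLike.star_def,
      ← intervalIntegral.intervalIntegral_conj]
    refine intervalIntegral.integral_congr fun τ hτ => ?_
    exact (hpsd τ (uIcc_of_le ht ▸ hτ)).1.apply i j
  · have hquad (B : Matrix m m 𝕜) : star x ⬝ᵥ (B *ᵥ x) = ∑ i, ∑ j, star (x i) * B i j * x j := by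
      simp [dotProduct, mulVec, Finset.mul_sum, mul_assoc]
    have hint (i j : m) : IntervalIntegrable (fun τ => star (x i) * f τ i j * x j) volume 0 t :=
      ((hf i j).const_mul _).mul_const _
    have hint_sum (i : m) :
        IntervalIntegrable (fun τ => ∑ j, star (x i) * f τ i j * x j) volume 0 t := by
      simpa only [Finset.sum_fn] using IntervalIntegrable.sum Finset.univ fun j _ => hint i j
    have hcomm : star x ⬝ᵥ ((of fun i j => ∫ τ in 0..t, f τ i j) *ᵥ x)
        = ∫ τ in 0..t, star x ⬝ᵥ (f τ *ᵥ x) := by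
      simp only [hquad, of_apply, intervalIntegral.integral_finsetSum fun i _ => hint_sum i,
        intervalIntegral.integral_finsetSum fun j _ => hint _ j,
        intervalIntegral.integral_mul_const, intervalIntegral.integral_const_mul]
    rw [hcomm, intervalIntegral.integral_of_le ht]
    refine integral_nonneg_of_ae ((ae_restrict_iff' measurableSet_Ioc).mpr (ae_of_all _ ?_))
    exact fun τ hτ => (hpsd τ (Ioc_subset_Icc_self hτ)).dotProduct_mulVec_nonneg x

end IntervalIntegral

section MatrixExp

variable {m : Type*} [Fintype m] [DecidableEq m]

attribute [local instance] Matrix.linftyOpNormedRing Matrix.linftyOpNormedAlgebra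

theorem hasDerivAt_transpose_exp_mul_mul_exp (A B : Matrix m m ℝ) (t : ℝ) :
    HasDerivAt (fun τ : ℝ => (NormedSpace.exp (τ • A))ᵀ * B * NormedSpace.exp (τ • A))
      ((NormedSpace.exp (t • A))ᵀ * (Aᵀ * B + B * A) * NormedSpace.exp (t • A)) t := by
  have hexpT : HasDerivAt (fun τ : ℝ => (NormedSpace.exp (τ • A))ᵀ)
      ((NormedSpace.exp (t • A))ᵀ * Aᵀ) t := by
    have hrw (τ : ℝ) : NormedSpace.exp (τ • Aᵀ) = (NormedSpace.exp (τ • A))ᵀ := by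
      rw [← transpose_smul, exp_transpose]
    rw [← funext hrw, ← hrw t]
    exact hasDerivAt_exp_smul_const Aᵀ t
  exact ((hexpT.mul_const B).mul (hasDerivAt_exp_smul_const' (𝕂 := ℝ) A t)).congr_deriv
    (by noncomm_ring)

theorem hasDerivAt_transpose_exp_mul_mul_exp_apply (A B : Matrix m m ℝ) (i j : m) (t : ℝ) :
    HasDerivAt (fun τ : ℝ => ((NormedSpace.exp (τ • A))ᵀ * B * NormedSpace.exp (τ • A)) i j)
      (((NormedSpace.exp (t • A))ᵀ * (Aᵀ * B + B * A) * NormedSpace.exp (t • A)) i j) t :=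
  (entryLinearMap ℝ ℝ i j).toContinuousLinearMap.hasFDerivAt.comp_hasDerivAt t
    (hasDerivAt_transpose_exp_mul_mul_exp A B t)

end MatrixExp

theorem continuous_transpose_exp_mul_mul_exp_apply {m : Type*} [Fintype m] [DecidableEq m]
    (A B : Matrix m m ℝ) (i j : m) :
    Continuous fun τ : ℝ => ((NormedSpace.exp (τ • A))ᵀ * B * NormedSpace.exp (τ • A)) i j :=
  continuous_iff_continuousAt.2 fun t =>
    (hasDerivAt_transpose_exp_mul_mul_exp_apply A B i j t).continuousAt

theorem Mmat_transpose_mul_add_mul {d : ℕ} (A B : Matrix (Fin d) (Fin d) ℝ) (t : ℝ) :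
    Mmat d A (Aᵀ * B + B * A) t = (NormedSpace.exp (t • A))ᵀ * B * NormedSpace.exp (t • A) - B := by
  ext i j
  rw [Mmat, of_apply, intervalIntegral.integral_eq_sub_of_hasDerivAt
    (fun τ _ => hasDerivAt_transpose_exp_mul_mul_exp_apply A B i j τ)
    ((continuous_transpose_exp_mul_mul_exp_apply A _ i j).intervalIntegrable 0 t)]
  simp

section Complexification

open Complex

theorem Matrix.PosSemidef.map_ofReal_sub_I_smul {m : Type*} [Fintype m] {N S : Matrix m m ℝ}
    (h : (N.map ofReal + I • S.map ofReal).PosSemidef) :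
    (N.map ofReal - I • S.map ofReal).PosSemidef := by
  -- the transpose of a Hermitian matrix is its entrywise conjugate
  have htranspose : N.map ofReal - I • S.map ofReal = (N.map ofReal + I • S.map ofReal)ᵀ := by
    ext i j
    rw [transpose_apply, ← h.1.apply]
    simp [Complex.ext_iff]
  exact htranspose ▸ h.transpose

theorem posSemidef_Mmat_add_I_smul_Mmat {d : ℕ} (A N S : Matrix (Fin d) (Fin d) ℝ) {t : ℝ}
    (ht : 0 ≤ t) (h : (N.map ofReal + I • S.map ofReal).PosSemidef) :
    ((Mmat d A N t).map ofReal + I • (Mmat d A S t).map ofReal).PosSemidef := by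
  set E : ℝ → Matrix (Fin d) (Fin d) ℝ := fun τ => NormedSpace.exp (τ • A)
  have hconj (τ : ℝ) : ((E τ).map ofReal)ᴴ * (N.map ofReal + I • S.map ofReal) * (E τ).map ofReal
      = ((E τ)ᵀ * N * E τ).map ofReal + I • ((E τ)ᵀ * S * E τ).map ofReal := by
    have hmul (X Y : Matrix (Fin d) (Fin d) ℝ) : (X * Y).map ofReal = X.map ofReal * Y.map ofReal :=
      Matrix.map_mul (f := ofRealHom)
    have hT : ((E τ).map ofReal)ᴴ = (E τ)ᵀ.map ofReal := by
      ext
      simp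
    rw [hT, hmul, hmul, hmul, hmul, Matrix.mul_add, Matrix.add_mul, Matrix.mul_smul,
      Matrix.smul_mul]
  have hNcont (i j) : Continuous fun τ => (((E τ)ᵀ * N * E τ) i j : ℂ) :=
    continuous_ofReal.comp (continuous_transpose_exp_mul_mul_exp_apply A N i j)
  have hScont (i j) : Continuous fun τ => (((E τ)ᵀ * S * E τ) i j : ℂ) :=
    continuous_ofReal.comp (continuous_transpose_exp_mul_mul_exp_apply A S i j)
  have hentry : (Mmat d A N t).map ofReal + I • (Mmat d A S t).map ofReal = of fun i j =>
      ∫ τ in 0..t,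
        (((E τ).map ofReal)ᴴ * (N.map ofReal + I • S.map ofReal) * (E τ).map ofReal) i j := by
    ext i j
    simp only [hconj, Mmat, Matrix.add_apply, Matrix.smul_apply, map_apply, of_apply, smul_eq_mul]
    rw [intervalIntegral.integral_add, intervalIntegral.integral_const_mul,
      intervalIntegral.integral_ofReal, intervalIntegral.integral_ofReal]
    exacts [(hNcont i j).intervalIntegrable _ _, ((hScont i j).const_mul I).intervalIntegrable _ _]
  rw [hentry]
  refine posSemidef_of_intervalIntegral ht (fun i j => Continuous.intervalIntegrable ?_ _ _)
    fun τ _ => h.conjTranspose_mul_mul_same _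
  simp only [hconj, Matrix.add_apply, Matrix.smul_apply, map_apply, smul_eq_mul]
  exact (hNcont i j).add ((hScont i j).const_mul I)

end Complexification

theorem integrated_condition_general (n : ℕ)
    (A N : Matrix (Fin (2*n)) (Fin (2*n)) ℝ)
    (hN : (N.map Complex.ofReal +
      Complex.I • ((Aᵀ * sympJ n + sympJ n * A).map Complex.ofReal)).PosSemidef) :
    ∀ t : ℝ, 0 ≤ t →
      ((Mmat (2*n) A N t).map Complex.ofReal +
        Complex.I • ((sympJ n -
          (NormedSpace.exp (t • A))ᵀ * sympJ n * NormedSpace.exp (t • A)).map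
            Complex.ofReal)).PosSemidef ∧
      ((Mmat (2*n) A N t).map Complex.ofReal -
        Complex.I • ((sympJ n -
          (NormedSpace.exp (t • A))ᵀ * sympJ n * NormedSpace.exp (t • A)).map
            Complex.ofReal)).PosSemidef := by
  intro t ht
  set J := sympJ n
  set E := NormedSpace.exp (t • A)
  constructor
  · have hN' : (N.map Complex.ofReal +
        Complex.I • ((Aᵀ * -J + -J * A).map Complex.ofReal)).PosSemidef := by
      rw [show Aᵀ * -J + -J * A = -(Aᵀ * J + J * A) by noncomm_ring,
        Matrix.map_neg _ Complex.ofReal_neg, smul_neg, ← sub_eq_add_neg]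
      exact hN.map_ofReal_sub_I_smul
    have h := posSemidef_Mmat_add_I_smul_Mmat A N _ ht hN'
    rwa [Mmat_transpose_mul_add_mul, show Eᵀ * -J * E - -J = J - Eᵀ * J * E by noncomm_ring] at h
  · have h := posSemidef_Mmat_add_I_smul_Mmat A N _ ht hN
    rwa [Mmat_transpose_mul_add_mul, ← neg_sub, Matrix.map_neg _ Complex.ofReal_neg, smul_neg,
      ← sub_eq_add_neg] at h

/-- If `N + i(AᵀJ + JA)` is positive semidefinite then for every `t ≥ 0` both
`M_t + i(J - (exp(tA))ᵀ J exp(tA))` and `M_t - i(J - (exp(tA))ᵀ J exp(tA))` are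
positive semidefinite, where `M_t = ∫_0^t (exp(τA))ᵀ N exp(τA) dτ`. -/
theorem integrated_condition (n : ℕ) (hn : 1 ≤ n)
    (A N : Matrix (Fin (2*n)) (Fin (2*n)) ℝ) (hNsymm : Nᵀ = N)
    (hN : (N.map Complex.ofReal +
      Complex.I • ((Aᵀ * sympJ n + sympJ n * A).map Complex.ofReal)).PosSemidef) :
    ∀ t : ℝ, 0 ≤ t →
      ((Mmat (2*n) A N t).map Complex.ofReal +
        Complex.I • ((sympJ n -
          (NormedSpace.exp (t • A))ᵀ * sympJ n * NormedSpace.exp (t • A)).map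
            Complex.ofReal)).PosSemidef ∧
      ((Mmat (2*n) A N t).map Complex.ofReal -
        Complex.I • ((sympJ n -
          (NormedSpace.exp (t • A))ᵀ * sympJ n * NormedSpace.exp (t • A)).map
            Complex.ofReal)).PosSemidef :=
  integrated_condition_general n A N hN
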